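/- arXiv:2102.02741 — 3 statements merged into one kernel-verified Lean document; each statement's English description precedes it below -/
import Mathlib

section
/- Let a = (a_1,...,a_M) ∈ ℝ^M and let a' = (a_1,...,a_M, 0,...,0) ∈ ℝ^N be a padded with N−M zeros (M ≤ N). Then the discrete Wasserstein-2 distance between the point sets {a_m} (with uniform weights 1/M) and {a'_n} (with uniform weights 1/N) satisfies d_w(a, a') ≤ √((N−M)/(M·N)) · ‖a‖₂. -/
open Finset

/-- The set of coupling matrices between uniform distributions on `α` and `β`. -/
def couplings (α β : Type) [Fintype α] [Fintype β] : Set (α → β → ℝ) :=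
  {T | (∀ m n, 0 ≤ T m n) ∧ (∀ m, ∑ n, T m n = 1 / (Fintype.card α : ℝ)) ∧
       (∀ n, ∑ m, T m n = 1 / (Fintype.card β : ℝ))}

/-- Discrete Wasserstein-2 distance, given the matrix of squared ground costs `c`. -/
noncomputable def dW {α β : Type} [Fintype α] [Fintype β] (c : α → β → ℝ) : ℝ :=
  sInf ((fun T => Real.sqrt (∑ m, ∑ n, T m n * c m n)) '' couplings α β)

/-- Discrete Gromov-Wasserstein distance between two "distance matrices". -/
noncomputable def dGW {α β : Type} [Fintype α] [Fintype β]
    (A : α → α → ℝ) (B : β → β → ℝ) : ℝ :=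
  sInf ((fun T => Real.sqrt (∑ m, ∑ m', ∑ n, ∑ n',
    T m n * T m' n' * (A m m' - B n n')^2)) '' couplings α β)

/-- Spectral norm (largest singular value) of a real square matrix. -/
noncomputable def sn {n : ℕ} (A : Matrix (Fin n) (Fin n) ℝ) : ℝ :=
  ‖Matrix.toEuclideanCLM (𝕜 := ℝ) A‖

/-- Frobenius norm. -/
noncomputable def frob {m n : ℕ} (A : Matrix (Fin m) (Fin n) ℝ) : ℝ :=
  Real.sqrt (∑ i, ∑ j, (A i j)^2)

/-- Euclidean norm of a vector. -/
noncomputable def enorm {n : ℕ} (v : Fin n → ℝ) : ℝ :=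
  Real.sqrt (∑ i, (v i)^2)

/-!
The coupling `T̂ = [I_M/N, 1_{M×(N−M)}/(MN)]` leaves mass `1/N` of each `a_m` on its own copy in
`a'`, at zero cost, and spreads the remaining row mass `1/M − 1/N = (N−M)/(MN)` uniformly over the
`N − M` padding zeros, each of which then receives `M · 1/(MN) = 1/N`. Moving `a_m` to `0` costs
`a_m²`, so the total cost is `(N−M)/(MN) · ‖a‖²`.
-/

lemma dW_le_sqrt_cost {α β : Type} [Fintype α] [Fintype β] (c : α → β → ℝ) {T : α → β → ℝ}
    (hT : T ∈ couplings α β) : dW c ≤ √(∑ m, ∑ n, T m n * c m n) :=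
  csInf_le ⟨0, by rintro _ ⟨S, -, rfl⟩; positivity⟩ ⟨T, hT, rfl⟩

section PaddingCoupling

variable {α β : Type} [Fintype α] [Fintype β] [DecidableEq β] (e : α ↪ β)

lemma sum_ite_mem_map_univ (c : ℝ) :
    ∑ n, (if n ∈ univ.map e then 0 else c) = (Fintype.card β - Fintype.card α) * c := by
  have hmap : ∑ n, (if n ∈ univ.map e then c else 0) = Fintype.card α * c := by
    rw [sum_ite_mem, univ_inter, sum_map]
    simp
  have htotal : ∑ _n : β, c = Fintype.card β * c := by simp
  rw [sub_mul, ← hmap, ← htotal, ← sum_sub_distrib]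
  congr! 1 with n
  split_ifs <;> ring

noncomputable def paddingCoupling (m : α) (n : β) : ℝ :=
  (if n = e m then (1 : ℝ) / Fintype.card β else 0) +
    (if n ∈ univ.map e then 0 else 1 / ((Fintype.card α : ℝ) * Fintype.card β))

lemma paddingCoupling_mem_couplings [Nonempty α] : paddingCoupling e ∈ couplings α β := by
  have : Nonempty β := .map e ‹_›
  have hα : (Fintype.card α : ℝ) ≠ 0 := by simp
  have hβ : (Fintype.card β : ℝ) ≠ 0 := by simp
  refine ⟨fun m n => by unfold paddingCoupling; positivity, fun m => ?_, fun n => ?_⟩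
  · simp only [paddingCoupling, sum_add_distrib, Fintype.sum_ite_eq', sum_ite_mem_map_univ]
    field_simp
    ring
  · by_cases hn : n ∈ univ.map e
    · obtain ⟨m₀, -, rfl⟩ := mem_map.1 hn
      rw [Fintype.sum_eq_single m₀ fun m hm => by simp [paddingCoupling, e.injective.ne hm.symm]]
      simp [paddingCoupling]
    · have hne : ∀ m, n ≠ e m := fun m h => hn (h ▸ mem_map_of_mem e (mem_univ m))
      simp [paddingCoupling, hn, hne]
      field_simp

lemma sum_paddingCoupling_mul_sq_sub {a : α → ℝ} {b : β → ℝ} (hon : ∀ m, b (e m) = a m)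
    (hoff : ∀ n ∉ Set.range e, b n = 0) :
    ∑ m, ∑ n, paddingCoupling e m n * (a m - b n) ^ 2
      = (Fintype.card β - Fintype.card α) / (Fintype.card α * Fintype.card β) * ∑ m, a m ^ 2 := by
  have hpt : ∀ m n, paddingCoupling e m n * (a m - b n) ^ 2
      = if n ∈ univ.map e then 0 else a m ^ 2 / (Fintype.card α * Fintype.card β) := by
    intro m n
    by_cases hn : n ∈ univ.map e
    · obtain ⟨m₀, -, rfl⟩ := mem_map.1 hn
      by_cases h : m₀ = m
      · simp [paddingCoupling, h, hon]
      · simp [paddingCoupling, h]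
    · have hne : n ≠ e m := fun h => hn (h ▸ mem_map_of_mem e (mem_univ m))
      simp [paddingCoupling, hn, hne, hoff n (by simpa using hn)]
      ring
  simp only [hpt, sum_ite_mem_map_univ, mul_sum]
  congr! 1 with m
  ring

end PaddingCoupling

theorem stmt_5 (M N : ℕ) (hM : 0 < M) (hMN : M ≤ N) (a : Fin M → ℝ)
    (a' : Fin N → ℝ)
    (ha' : ∀ n : Fin N, a' n = if h : (n : ℕ) < M then a ⟨n, h⟩ else 0) :
    dW (fun m n => (a m - a' n)^2)
      ≤ Real.sqrt (((N : ℝ) - M) / (M * N)) * _root_.enorm a := by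
  have : Nonempty (Fin M) := ⟨⟨0, hM⟩⟩
  have hon : ∀ m, a' (Fin.castLEEmb hMN m) = a m := fun m => by simp [ha']
  have hoff : ∀ n ∉ Set.range (Fin.castLEEmb hMN), a' n = 0 := fun n hn => by
    simp_all [Fin.range_castLE]
  calc dW (fun m n => (a m - a' n) ^ 2)
      ≤ √(∑ m, ∑ n, paddingCoupling (Fin.castLEEmb hMN) m n * (a m - a' n) ^ 2) :=
        dW_le_sqrt_cost _ (paddingCoupling_mem_couplings _)
    _ = √(((N : ℝ) - M) / (M * N)) * _root_.enorm a := by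
      rw [sum_paddingCoupling_mul_sq_sub _ hon hoff, Real.sqrt_mul' _ (by positivity),
        _root_.enorm]
      simp
end

section
/- Let f : [0,1] → ℝ satisfy the lower Lipschitz bound C₁|x−x'| ≤ |f(x)−f(x')|, and let g : [0,1]² → ℝ be Lipschitz with constant C^g. Let x̃_1,...,x̃_N, y_1,...,y_N ∈ [0,1], set Ã₁ = [g(x̃_v, x̃_{v'})], A₂ = [g(y_u, y_{u'})], μ̃ = (f(x̃_v))_v, ν = (f(y_u))_u. Then for any N×N permutation matrix P, ‖Ã₁ − P A₂ Pᵀ‖_F ≤ (√(2N)·C^g/C₁)·‖μ̃ − Pν‖₂. -/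
/-!
Since `P` is the permutation matrix of `σ⁻¹`, `P A₂ Pᵀ` is `A₂` reindexed by `σ⁻¹` on both sides
and `P ν = ν ∘ σ⁻¹`, so every comparison pairs `x̃_v` with `y_{σ⁻¹ v}`. Entrywise, the Lipschitz bound
on `g` and the lower Lipschitz bound on `f` give
`(Ã₁ - P A₂ Pᵀ)_{v v'}² ≤ (C^g / C₁)² (d_v² + d_{v'}²)` with `d = μ̃ - P ν`,
and summing over `v, v'` turns the right-hand side into `(C^g / C₁)² · 2N · ‖d‖²`.
-/

open Finset

/-- Euclidean norm of a vector. -/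
noncomputable def enorm₂ {n : ℕ} (v : Fin n → ℝ) : ℝ :=
  Real.sqrt (∑ i, (v i)^2)

lemma sq_le_of_abs_le_mul_sqrt {a c s : ℝ} (hs : 0 ≤ s) (h : |a| ≤ c * √s) : a ^ 2 ≤ c ^ 2 * s := by
  calc a ^ 2 = |a| ^ 2 := (sq_abs a).symm
    _ ≤ (c * √s) ^ 2 := pow_le_pow_left₀ (abs_nonneg a) h 2
    _ = c ^ 2 * s := by rw [mul_pow, Real.sq_sqrt hs]

lemma sq_le_sq_div_of_mul_abs_le {C a b : ℝ} (hC : 0 < C) (h : C * |a| ≤ |b|) :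
    a ^ 2 ≤ (b / C) ^ 2 := by
  rw [← sq_abs a, ← sq_abs (b / C), abs_div, abs_of_pos hC]
  exact pow_le_pow_left₀ (abs_nonneg a) ((le_div_iff₀' hC).mpr h) 2

lemma sum_sum_sq_add_sq {ι : Type*} [Fintype ι] (d : ι → ℝ) :
    ∑ i, ∑ j, (d i ^ 2 + d j ^ 2) = 2 * Fintype.card ι * ∑ i, d i ^ 2 := by
  simp only [sum_add_distrib, sum_const, card_univ, nsmul_eq_mul, ← mul_sum]
  ring

lemma frob_le_of_sq_le {m : ℕ} {E : Matrix (Fin m) (Fin m) ℝ} {d : Fin m → ℝ} {K : ℝ}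
    (hK : 0 ≤ K) (h : ∀ i j, E i j ^ 2 ≤ K ^ 2 * (d i ^ 2 + d j ^ 2)) :
    frob E ≤ √(2 * m) * K * enorm₂ d := by
  have hsum : ∑ i, ∑ j, E i j ^ 2 ≤ K ^ 2 * (2 * m * ∑ i, d i ^ 2) := by
    calc ∑ i, ∑ j, E i j ^ 2 ≤ ∑ i, ∑ j, K ^ 2 * (d i ^ 2 + d j ^ 2) :=
          sum_le_sum fun i _ => sum_le_sum fun j _ => h i j
      _ = K ^ 2 * (2 * m * ∑ i, d i ^ 2) := by
          simp only [← mul_sum, sum_sum_sq_add_sq, Fintype.card_fin]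
  calc frob E ≤ √(K ^ 2 * (2 * m * ∑ i, d i ^ 2)) := Real.sqrt_le_sqrt hsum
    _ = √(2 * m) * K * enorm₂ d := by
        rw [enorm₂, Real.sqrt_mul (sq_nonneg K), Real.sqrt_sq hK,
          Real.sqrt_mul (by positivity)]
        ring

lemma Matrix.permMatrix_mul_mul_transpose {n R : Type*} [Fintype n] [DecidableEq n]
    [NonAssocSemiring R] (σ : Equiv.Perm n) (A : Matrix n n R) :
    σ.permMatrix R * A * (σ.permMatrix R).transpose = A.submatrix σ σ := by
  rw [transpose_permMatrix, Equiv.Perm.permMatrix, Equiv.Perm.permMatrix,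
    PEquiv.toMatrix_toPEquiv_mul, PEquiv.mul_toMatrix_toPEquiv, submatrix_submatrix]
  rfl

lemma Matrix.permMatrix_symm_apply {n R : Type*} [DecidableEq n] [Zero R] [One R]
    (σ : Equiv.Perm n) (i j : n) :
    Equiv.Perm.permMatrix R σ.symm i j = if σ j = i then 1 else 0 := by
  simp only [Equiv.Perm.permMatrix, PEquiv.toMatrix_apply, Equiv.toPEquiv_apply,
    Option.mem_def, Option.some_inj]
  exact if_congr (σ.symm_apply_eq.trans eq_comm) rfl rfl

theorem stmt_11 (C₁ Cg : ℝ) (hC₁ : 0 < C₁) (hCg : 0 ≤ Cg)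
    (f : ℝ → ℝ) (g : ℝ → ℝ → ℝ)
    (hf : ∀ x ∈ Set.Icc (0:ℝ) 1, ∀ x' ∈ Set.Icc (0:ℝ) 1,
      C₁ * |x - x'| ≤ |f x - f x'|)
    (hg : ∀ x ∈ Set.Icc (0:ℝ) 1, ∀ y ∈ Set.Icc (0:ℝ) 1,
          ∀ x' ∈ Set.Icc (0:ℝ) 1, ∀ y' ∈ Set.Icc (0:ℝ) 1,
      |g x y - g x' y'| ≤ Cg * Real.sqrt ((x - x')^2 + (y - y')^2))
    (N : ℕ) (xt y : Fin N → ℝ)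
    (hxt : ∀ v, xt v ∈ Set.Icc (0:ℝ) 1) (hy : ∀ u, y u ∈ Set.Icc (0:ℝ) 1)
    (At A₂ : Matrix (Fin N) (Fin N) ℝ)
    (hAt : ∀ v v', At v v' = g (xt v) (xt v'))
    (hA₂ : ∀ u u', A₂ u u' = g (y u) (y u'))
    (μt ν : Fin N → ℝ) (hμt : ∀ v, μt v = f (xt v)) (hν : ∀ u, ν u = f (y u))
    (σ : Equiv.Perm (Fin N)) (P : Matrix (Fin N) (Fin N) ℝ)
    (hP : ∀ v u, P v u = if σ u = v then 1 else 0) :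
    frob (At - P * A₂ * P.transpose)
      ≤ Real.sqrt (2 * N) * Cg / C₁ * enorm₂ (μt - P.mulVec ν) := by
  obtain rfl : P = Equiv.Perm.permMatrix ℝ σ.symm :=
    Matrix.ext fun v u => by rw [hP, Matrix.permMatrix_symm_apply]
  rw [Matrix.permMatrix_mul_mul_transpose, Matrix.permMatrix_mulVec, mul_div_assoc]
  refine frob_le_of_sq_le (div_nonneg hCg hC₁.le) fun v v' => ?_
  have hpaired : ∀ v, (xt v - y (σ.symm v)) ^ 2 ≤ ((μt - ν ∘ σ.symm) v / C₁) ^ 2 := fun v => by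
    simpa [hμt, hν] using sq_le_sq_div_of_mul_abs_le hC₁ (hf _ (hxt v) _ (hy (σ.symm v)))
  calc (At - A₂.submatrix σ.symm σ.symm) v v' ^ 2
      = (g (xt v) (xt v') - g (y (σ.symm v)) (y (σ.symm v'))) ^ 2 := by simp [hAt, hA₂]
    _ ≤ Cg ^ 2 * ((xt v - y (σ.symm v)) ^ 2 + (xt v' - y (σ.symm v')) ^ 2) :=
        sq_le_of_abs_le_mul_sqrt (by positivity)
          (hg _ (hxt v) _ (hxt v') _ (hy (σ.symm v)) _ (hy (σ.symm v')))
    _ ≤ Cg ^ 2 * (((μt - ν ∘ σ.symm) v / C₁) ^ 2 + ((μt - ν ∘ σ.symm) v' / C₁) ^ 2) := by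
        gcongr Cg ^ 2 * (?_ + ?_)
        exacts [hpaired v, hpaired v']
    _ = (Cg / C₁) ^ 2 * ((μt - ν ∘ σ.symm) v ^ 2 + (μt - ν ∘ σ.symm) v' ^ 2) := by ring
end

section
/- Let â = {t_1^u,...,t_I^u} ⊂ [0,T] and b̂ = {t_1^v,...,t_J^v} ⊂ [0,T] be two increasing sequences of event times with I ≤ J, and let N̂(t) = #{i : t_i^u ≤ t}, N(t) = #{j : t_j^v ≤ t} be their counting functions. Then (1/T)∫₀^T |N̂(t) − N(t)| dt = (1/T)[Σ_{i=1}^I |t_i^u − t_i^v| + Σ_{i=I+1}^J (T − t_i^v)]. -/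
open Finset

/-!
Write `𝟙[c ≤ t]` for the unit step at `c`. For monotone sequences `a, b` indexed by the same
finite linear order, the index sets `{i | a i ≤ t}` and `{i | b i ≤ t}` are lower sets, hence
nested, so all differences `𝟙[a i ≤ t] - 𝟙[b i ≤ t]` have one sign and
`|N_a t - N_b t| = ∑ i, |𝟙[a i ≤ t] - 𝟙[b i ≤ t]|`. Each summand is the indicator of the interval
between `a i` and `b i`, with integral `|a i - b i|`. The unequal-length case reduces to this one
by appending `J - I` events at time `T` to the shorter sequence: they do not change its counting
function on `[0, T)`, and they contribute `T - t_j^v` to the sum.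
-/

open MeasureTheory intervalIntegral

noncomputable def countingFunction {ι : Type*} [Fintype ι] (a : ι → ℝ) (t : ℝ) : ℕ :=
  (univ.filter fun i => a i ≤ t).card

lemma intervalIntegrable_step (c a b : ℝ) :
    IntervalIntegrable (fun t => if c ≤ t then (1 : ℝ) else 0) volume a b :=
  Monotone.intervalIntegrable fun x y hxy => by
    by_cases hx : c ≤ x
    · simp [hx, hx.trans hxy]
    · split_ifs <;> norm_num

lemma integral_step {c T : ℝ} (h0 : 0 ≤ c) (hcT : c ≤ T) :
    ∫ t in (0 : ℝ)..T, (if c ≤ t then (1 : ℝ) else 0) = T - c := by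
  rw [← integral_add_adjacent_intervals (intervalIntegrable_step c 0 c)
      (intervalIntegrable_step c c T),
    integral_congr_Ioo_of_le (g := fun _ => 0) h0 fun t ht => if_neg ht.2.not_ge,
    integral_congr_Ioo_of_le (g := fun _ => 1) hcT fun t ht => if_pos ht.1.le]
  simp

lemma abs_step_sub_step (a b t : ℝ) :
    |(if a ≤ t then (1 : ℝ) else 0) - (if b ≤ t then 1 else 0)| =
      (if min a b ≤ t then (1 : ℝ) else 0) - (if max a b ≤ t then 1 else 0) := by
  rcases le_total a b with h | h <;>
    simp only [min_eq_left, min_eq_right, max_eq_right, max_eq_left, h] <;>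
    split_ifs <;> simp_all <;> linarith

lemma integral_abs_step_sub_step {a b T : ℝ} (ha : a ∈ Set.Icc 0 T) (hb : b ∈ Set.Icc 0 T) :
    ∫ t in (0 : ℝ)..T, |(if a ≤ t then (1 : ℝ) else 0) - (if b ≤ t then 1 else 0)| = |a - b| := by
  simp_rw [abs_step_sub_step]
  rw [integral_sub (intervalIntegrable_step _ _ _) (intervalIntegrable_step _ _ _),
    integral_step (le_min ha.1 hb.1) (min_le_of_left_le ha.2),
    integral_step (le_max_of_le_left ha.1) (max_le ha.2 hb.2), ← max_sub_min_eq_abs']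
  ring

lemma abs_sum_boole_sub_sum_boole {ι : Type*} {p q : ι → Prop}
    [DecidablePred p] [DecidablePred q] (s : Finset ι) (hpq : ∀ i, p i → q i) :
    |∑ i ∈ s, (if p i then (1 : ℝ) else 0) - ∑ i ∈ s, (if q i then 1 else 0)| =
      ∑ i ∈ s, |(if p i then (1 : ℝ) else 0) - (if q i then 1 else 0)| := by
  have hle (i : ι) : (if p i then (1 : ℝ) else 0) - (if q i then 1 else 0) ≤ 0 := by
    split_ifs <;> simp_all
  rw [← sum_sub_distrib, abs_of_nonpos (sum_nonpos fun i _ => hle i), ← sum_neg_distrib]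
  exact sum_congr rfl fun i _ => (abs_of_nonpos (hle i)).symm

section EqualLength

variable {ι : Type*} [Fintype ι] [LinearOrder ι] {a b : ι → ℝ}

lemma abs_countingFunction_sub (ha : Monotone a) (hb : Monotone b) (t : ℝ) :
    |(countingFunction a t : ℝ) - countingFunction b t| =
      ∑ i, |(if a i ≤ t then (1 : ℝ) else 0) - (if b i ≤ t then 1 else 0)| := by
  have hA : IsLowerSet {i | a i ≤ t} := fun i j hji hi => (ha hji).trans hi
  have hB : IsLowerSet {i | b i ≤ t} := fun i j hji hi => (hb hji).trans hi
  rw [countingFunction, countingFunction, natCast_card_filter, natCast_card_filter]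
  rcases hA.total hB with hAB | hBA
  · exact abs_sum_boole_sub_sum_boole (p := (a · ≤ t)) (q := (b · ≤ t)) _ fun i hi => hAB hi
  · rw [abs_sub_comm,
      abs_sum_boole_sub_sum_boole (p := (b · ≤ t)) (q := (a · ≤ t)) _ fun i hi => hBA hi]
    simp_rw [abs_sub_comm]

lemma integral_abs_countingFunction_sub {T : ℝ} (ha : Monotone a) (hb : Monotone b)
    (ha' : ∀ i, a i ∈ Set.Icc 0 T) (hb' : ∀ i, b i ∈ Set.Icc 0 T) :
    ∫ t in (0 : ℝ)..T, |(countingFunction a t : ℝ) - countingFunction b t| = ∑ i, |a i - b i| := by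
  simp_rw [abs_countingFunction_sub ha hb]
  rw [integral_finsetSum fun i _ =>
    ((intervalIntegrable_step _ _ _).sub (intervalIntegrable_step _ _ _)).abs]
  exact sum_congr rfl fun i _ => integral_abs_step_sub_step (ha' i) (hb' i)

end EqualLength

section Padding

variable {n k : ℕ} {u : Fin n → ℝ} {T : ℝ}

lemma monotone_append_const (hu : Monotone u) (huT : ∀ i, u i ≤ T) :
    Monotone (Fin.append u fun _ : Fin k => T) := by
  intro i j hij
  induction i using Fin.addCases <;> induction j using Fin.addCases <;>
    simp only [Fin.append_left, Fin.append_right, le_refl, huT] at hij ⊢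
  · exact hu ((Fin.strictMono_castAdd k).le_iff_le.mp hij)
  · simp [Fin.le_def] at hij; omega

lemma countingFunction_append_const (u : Fin n → ℝ) {t : ℝ} (ht : t < T) :
    countingFunction (Fin.append u fun _ : Fin k => T) t = countingFunction u t := by
  rw [countingFunction, countingFunction, card_filter, card_filter, Fin.sum_univ_add]
  simp [ht.not_ge]

lemma sum_abs_append_const_sub (u : Fin n → ℝ) (s : Fin (n + k) → ℝ) (hsT : ∀ j, s j ≤ T) :
    ∑ j, |Fin.append u (fun _ : Fin k => T) j - s j| =
      ∑ i, |u i - s (Fin.castAdd k i)| + ∑ j : Fin (n + k), if (j : ℕ) < n then 0 else T - s j := by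
  simp [Fin.sum_univ_add, abs_of_nonneg, hsT]

end Padding

theorem stmt_16 (T : ℝ) (hT : 0 < T) (I J : ℕ) (hIJ : I ≤ J)
    (u : Fin I → ℝ) (s : Fin J → ℝ)
    (hu : StrictMono u) (hs : StrictMono s)
    (hu' : ∀ i, u i ∈ Set.Icc 0 T) (hs' : ∀ j, s j ∈ Set.Icc 0 T) :
    (1 / T) * ∫ t in (0:ℝ)..T,
        |((Finset.univ.filter (fun i => u i ≤ t)).card : ℝ)
          - ((Finset.univ.filter (fun j => s j ≤ t)).card : ℝ)|
      = (1 / T) * ((∑ i : Fin I, |u i - s (Fin.castLE hIJ i)|)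
          + ∑ j : Fin J, if (j : ℕ) < I then 0 else T - s j) := by
  obtain ⟨k, rfl⟩ := Nat.exists_eq_add_of_le hIJ
  have hpad : ∀ j, Fin.append u (fun _ : Fin k => T) j ∈ Set.Icc 0 T := fun j => by
    induction j using Fin.addCases <;> simp [hu', hT.le]
  have key := integral_abs_countingFunction_sub
    (monotone_append_const hu.monotone fun i => (hu' i).2) hs.monotone hpad hs'
  rw [integral_congr_Ioo_of_le hT.le fun t ht => by rw [countingFunction_append_const u ht.2],
    sum_abs_append_const_sub u s fun j => (hs' j).2] at key
  exact congrArg _ key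
end
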